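/- Let p,q ∈ (0,∞) with q ≤ p, let K, K' ⊆ closure(Λ₊) be compact, and let g ∈ Hol_{K'}(E×F_ℂ) with g_0 ∈ L^q(𝒩). For ε > 0 and f ∈ Hol_K(E×F_ℂ) define B^{q,g}_{ε,f} := {(ζ,x) ∈ 𝒩 : |f_0(ζ,x)| ≤ ε ‖f_0 · L_{(ζ,x)}g_0‖_{L^q(𝒩)}}. Then there is a constant C > 0 such that ‖χ_{B^{q,g}_{ε,f}} f_0‖_{L^p(𝒩)} ≤ C ε ‖f_0‖_{L^p(𝒩)} for every ε > 0 and every f ∈ ℬ^p_K(𝒩). -/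

import Mathlib

open MeasureTheory Complex Filter Set
open scoped RealInnerProductSpace ENNReal NNReal Pointwise Classical

noncomputable section

namespace Siegel

/-! Measure-theoretic instances for complex Euclidean space. -/

instance (n : ℕ) : MeasurableSpace (EuclideanSpace ℂ (Fin n)) :=
  MeasurableSpace.comap WithLp.ofLp MeasurableSpace.pi
instance (n : ℕ) : BorelSpace (EuclideanSpace ℂ (Fin n)) := PiLp.borelSpace _
noncomputable instance (n : ℕ) : InnerProductSpace ℝ (EuclideanSpace ℂ (Fin n)) :=
  InnerProductSpace.rclikeToReal ℂ _

/-- The complex Hilbert space `E` of dimension `n`. -/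
abbrev E (n : ℕ) := EuclideanSpace ℂ (Fin n)
/-- The real Hilbert space `F` of dimension `m`, identified with its dual `F'`. -/
abbrev F (m : ℕ) := EuclideanSpace ℝ (Fin m)
/-- The complexification `F_ℂ` of `F`. -/
abbrev FC (m : ℕ) := EuclideanSpace ℂ (Fin m)
/-- The ambient complex space `E × F_ℂ`. -/
abbrev X (n m : ℕ) := E n × FC m
/-- The Siegel CR manifold `𝒩 = E × F`. -/
abbrev N (n m : ℕ) := E n × F m

def rePart {m : ℕ} (z : FC m) : F m := WithLp.toLp 2 fun k => (z k).re
def imPart {m : ℕ} (z : FC m) : F m := WithLp.toLp 2 fun k => (z k).im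
def toC {m : ℕ} (x : F m) : FC m := WithLp.toLp 2 fun k => (x k : ℂ)

/-- `Φ : E × E → F_ℂ` is a hermitian map: `ℂ`-linear in the first variable and
conjugate-symmetric. -/
structure IsHermitianMap {n m : ℕ} (Φ : E n → E n → FC m) : Prop where
  add_left : ∀ ζ₁ ζ₂ ζ', Φ (ζ₁ + ζ₂) ζ' = Φ ζ₁ ζ' + Φ ζ₂ ζ'
  smul_left : ∀ (c : ℂ) ζ ζ', Φ (c • ζ) ζ' = c • Φ ζ ζ'
  conj_symm : ∀ ζ ζ' k, Φ ζ' ζ k = starRingEnd ℂ (Φ ζ ζ' k)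

/-- `Φ(ζ) := Φ(ζ,ζ)`, a real vector since `Φ` is hermitian. -/
def phiQ {n m : ℕ} (Φ : E n → E n → FC m) (ζ : E n) : F m := rePart (Φ ζ ζ)

/-- The open convex cone `Λ₊ = {λ ∈ F' : ⟨λ, Φ(ζ)⟩ > 0 for all ζ ≠ 0}`. -/
def Lambda {n m : ℕ} (Φ : E n → E n → FC m) : Set (F m) :=
  {l | ∀ ζ : E n, ζ ≠ 0 → 0 < ⟪l, phiQ Φ ζ⟫}

/-- `ρ(ζ,z) = Im z − Φ(ζ)`. -/
def rho {n m : ℕ} (Φ : E n → E n → FC m) (p : X n m) : F m := imPart p.2 - phiQ Φ p.1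

/-- The support function `H_K(h) = sup_{λ ∈ −K} ⟨λ,h⟩`. -/
def HK {m : ℕ} (K : Set (F m)) (h : F m) : ℝ := sSup ((fun l : F m => -⟪l, h⟫) '' K)

/-- The point `(ζ, x + iΦ(ζ) + ih)` of `E × F_ℂ` attached to `(ζ,x) ∈ 𝒩` and `h ∈ F`;
for a function `f` on `E × F_ℂ`, `f_h = f ∘ liftN Φ h`. -/
def liftN {n m : ℕ} (Φ : E n → E n → FC m) (h : F m) (w : N n m) : X n m :=
  (w.1, toC w.2 + Complex.I • toC (phiQ Φ w.1 + h))

/-- The group product on `𝒩`: `(ζ,x)(ζ',x') = (ζ+ζ', x+x'+2 Im Φ(ζ,ζ'))`. -/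
def mulN {n m : ℕ} (Φ : E n → E n → FC m) (a b : N n m) : N n m :=
  (a.1 + b.1, a.2 + b.2 + (2:ℝ) • imPart (Φ a.1 b.1))

def invN {n m : ℕ} (a : N n m) : N n m := (-a.1, -a.2)

/-- The group product on `E × F_ℂ`: `(ζ,z)(ζ',z') = (ζ+ζ', z+z'+2iΦ(ζ',ζ))`. -/
def mulX {n m : ℕ} (Φ : E n → E n → FC m) (a b : X n m) : X n m :=
  (a.1 + b.1, a.2 + b.2 + (2 * Complex.I) • Φ b.1 a.1)

def invX {n m : ℕ} (Φ : E n → E n → FC m) (a : X n m) : X n m :=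
  (-a.1, -a.2 + (2 * Complex.I) • Φ a.1 a.1)

/-- Left translate of a function on `𝒩`: `L_w g = g(w⁻¹ ·)`. -/
def LtN {n m : ℕ} (Φ : E n → E n → FC m) (w : N n m) (g : N n m → ℂ) : N n m → ℂ :=
  fun v => g (mulN Φ (invN w) v)

/-- Left translate of a function on `E × F_ℂ`. -/
def LtX {n m : ℕ} (Φ : E n → E n → FC m) (a : X n m) (f : X n m → ℂ) : X n m → ℂ :=
  fun x => f (mulX Φ (invX Φ a) x)

/-- The dilations `t·(ζ,x) = (t^{1/2} ζ, t x)` on `𝒩`. -/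
def dilN {n m : ℕ} (t : ℝ) (a : N n m) : N n m := ((Real.sqrt t : ℂ) • a.1, t • a.2)

/-- The homogeneity parameter: `θ = 1/2` if `n > 0`, `θ = 1` if `n = 0`. -/
def theta (n : ℕ) : ℝ := if n = 0 then 1 else 1/2

/-- `d_𝒩` is a left-invariant `θ`-homogeneous distance on `𝒩` (inducing the usual
topology, with compact closed balls). -/
structure IsHomDist {n m : ℕ} (Φ : E n → E n → FC m) (dN : N n m → N n m → ℝ) : Prop where
  symm : ∀ a b, dN a b = dN b a
  triangle : ∀ a b c, dN a c ≤ dN a b + dN b c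
  eq_zero_iff : ∀ a b, dN a b = 0 ↔ a = b
  continuous : Continuous fun q : N n m × N n m => dN q.1 q.2
  compact_closedBall : ∀ a r, IsCompact {b | dN a b ≤ r}
  left_invariant : ∀ g a b, dN (mulN Φ g a) (mulN Φ g b) = dN a b
  homogeneous : ∀ t : ℝ, 0 < t → ∀ a b, dN (dilN t a) (dilN t b) = t ^ theta n * dN a b

/-- The distance `d` on `E × F_ℂ`. -/
def dX {n m : ℕ} (Φ : E n → E n → FC m) (dN : N n m → N n m → ℝ) (p q : X n m) : ℝ :=
  max (dN (p.1, rePart p.2) (q.1, rePart q.2)) (dist (rho Φ p) (rho Φ q))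

/-- Closed ball for the distance `d`. -/
def cBall {n m : ℕ} (Φ : E n → E n → FC m) (dN : N n m → N n m → ℝ) (p : X n m) (R : ℝ) :
    Set (X n m) := {q | dX Φ dN p q ≤ R}

/-- Open ball for the distance `d`. -/
def oBall {n m : ℕ} (Φ : E n → E n → FC m) (dN : N n m → N n m → ℝ) (p : X n m) (R : ℝ) :
    Set (X n m) := {q | dX Φ dN p q < R}

/-- `M_R(μ)(ζ,z) = μ(B̄((ζ,z),R))`. -/
def MR {n m : ℕ} (Φ : E n → E n → FC m) (dN : N n m → N n m → ℝ) (μ : Measure (X n m))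
    (R : ℝ) (p : X n m) : ℝ≥0∞ := μ (cBall Φ dN p R)

/-- `M_{K,R}(μ) = M_R(e^{H_K ∘ ρ}·μ)`. -/
def MKR {n m : ℕ} (Φ : E n → E n → FC m) (dN : N n m → N n m → ℝ) (K : Set (F m))
    (μ : Measure (X n m)) (R : ℝ) (p : X n m) : ℝ≥0∞ :=
  ∫⁻ q in cBall Φ dN p R, ENNReal.ofReal (Real.exp (HK K (rho Φ q))) ∂μ

/-- The support of a measure. -/
def suppM {α : Type*} [TopologicalSpace α] [MeasurableSpace α] (μ : Measure α) : Set α :=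
  {x | ∀ U : Set α, x ∈ U → IsOpen U → 0 < μ U}

/-- The (tempered) distribution `f` on `F` has Fourier transform supported in `K`. -/
def FTSuppIn {m : ℕ} (K : Set (F m)) (g : F m → ℂ) : Prop :=
  ∀ φ : SchwartzMap (F m) ℂ, Disjoint (tsupport ⇑φ) K →
    ∫ x, g x * VectorFourier.fourierIntegral Real.fourierChar volume (innerₗ (F m)) (⇑φ) x = 0

/-- `Hol_K(E × F_ℂ)`: entire functions with polynomial growth relative to `e^{H_K ∘ ρ}` whose
restriction to each slice has spectrum in `K`. -/
def HolK {n m : ℕ} (Φ : E n → E n → FC m) (K : Set (F m)) (f : X n m → ℂ) : Prop :=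
  Differentiable ℂ f ∧
  (∃ C A : ℝ, 0 < C ∧ 0 < A ∧ ∀ p : X n m,
      ‖f p‖ ≤ C * (1 + ‖p.1‖ + ‖p.2‖) ^ A * Real.exp (HK K (rho Φ p))) ∧
  ∀ ζ : E n, FTSuppIn K fun x : F m => f (liftN Φ 0 (ζ, x))

/-- The Bernstein quasi-norm `‖f₀‖_{L^p(𝒩)}`. -/
def BNorm {n m : ℕ} (Φ : E n → E n → FC m) (p : ℝ≥0∞) (f : X n m → ℂ) : ℝ≥0∞ :=
  eLpNorm (fun w => f (liftN Φ 0 w)) p volume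

/-- Membership in the Bernstein space `ℬ^p_K(𝒩)`. -/
def MemB {n m : ℕ} (Φ : E n → E n → FC m) (K : Set (F m)) (p : ℝ≥0∞) (f : X n m → ℂ) : Prop :=
  HolK Φ K f ∧ BNorm Φ p f < ⊤

/-- `μ` is a `q`-Carleson measure for `ℬ^p_K(𝒩)`. -/
def Carleson {n m : ℕ} (Φ : E n → E n → FC m) (K : Set (F m)) (p q : ℝ≥0∞)
    (μ : Measure (X n m)) : Prop :=
  ∃ C : ℝ≥0∞, C < ⊤ ∧ ∀ f, MemB Φ K p f → eLpNorm f q μ ≤ C * BNorm Φ p f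

/-- `μ` is a compact `q`-Carleson measure for `ℬ^p_K(𝒩)`: the inclusion
`ℬ^p_K(𝒩) → L^q(μ)` is moreover a compact operator. -/
def CompactCarleson {n m : ℕ} (Φ : E n → E n → FC m) (K : Set (F m)) (p q : ℝ≥0∞)
    (μ : Measure (X n m)) : Prop :=
  Carleson Φ K p q μ ∧
  ∀ f : ℕ → X n m → ℂ, (∀ j, MemB Φ K p (f j) ∧ BNorm Φ p (f j) ≤ 1) →
    ∃ φ : ℕ → ℕ, StrictMono φ ∧
      ∀ ε : ℝ≥0∞, 0 < ε → ∃ N₀ : ℕ, ∀ j k, N₀ ≤ j → N₀ ≤ k →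
        eLpNorm (fun x => f (φ j) x - f (φ k) x) q μ ≤ ε

/-- `μ` is `p`-sampling for `ℬ^p_K(𝒩)`. -/
def Sampling {n m : ℕ} (Φ : E n → E n → FC m) (K : Set (F m)) (p : ℝ≥0∞)
    (μ : Measure (X n m)) : Prop :=
  Carleson Φ K p p μ ∧
  ∃ c : ℝ≥0∞, 0 < c ∧ ∀ f, MemB Φ K p f → c * BNorm Φ p f ≤ eLpNorm f p μ

/-- `μ` is strongly `p`-sampling for `ℬ^p_K(𝒩)`:
`ℬ^p_K(𝒩) = {f ∈ Hol_K : f ∈ L^p(μ)}`. -/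
def StronglySampling {n m : ℕ} (Φ : E n → E n → FC m) (K : Set (F m)) (p : ℝ≥0∞)
    (μ : Measure (X n m)) : Prop :=
  Sampling Φ K p μ ∧
  ∀ f, HolK Φ K f → eLpNorm f p μ < ⊤ → BNorm Φ p f < ⊤

/-- `K_ε = K + (B̄_{F'}(0,ε) ∩ closure Λ₊)`. -/
def Keps {n m : ℕ} (Φ : E n → E n → FC m) (K : Set (F m)) (ε : ℝ) : Set (F m) :=
  K + (Metric.closedBall 0 ε ∩ closure (Lambda Φ))

/-- `L^p` "norm" for `ℝ≥0∞`-valued functions, `p ∈ (0,∞]`. -/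
def lpENN {α : Type*} [MeasurableSpace α] (p : ℝ≥0∞) (μ : Measure α) (u : α → ℝ≥0∞) : ℝ≥0∞ :=
  if p = ∞ then essSup u μ else (∫⁻ a, u a ^ p.toReal ∂μ) ^ (1 / p.toReal)

/-- The mixed norm `‖h ↦ ‖u_h‖_{L^p(𝒩)}‖_{L^q(F)}` of `L^{p,q}(E × F_ℂ)`. -/
def mixedNorm {n m : ℕ} (Φ : E n → E n → FC m) (p q : ℝ≥0∞) (u : X n m → ℝ≥0∞) : ℝ≥0∞ :=
  lpENN q volume fun h : F m => lpENN p volume fun w : N n m => u (liftN Φ h w)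

/-- `u ∈ L^{p,q}_0(E × F_ℂ)`: `u` lies in the closure of the measurable step functions in
`L^{p,q}(E × F_ℂ)`. -/
def MemLpq0 {n m : ℕ} (Φ : E n → E n → FC m) (p q : ℝ≥0∞) (u : X n m → ℝ≥0∞) : Prop :=
  mixedNorm Φ p q u < ⊤ ∧
  ∀ ε : ℝ≥0∞, 0 < ε → ∃ s : SimpleFunc (X n m) ℝ≥0∞,
    mixedNorm Φ p q (fun w => (u w - s w) + (s w - u w)) ≤ ε

/-- `ℓ^p` "norm" of an `ℝ≥0∞`-valued family. -/
def lpSum {ι : Type*} (p : ℝ≥0∞) (b : ι → ℝ≥0∞) : ℝ≥0∞ :=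
  if p = ∞ then ⨆ i, b i else (∑' i, b i ^ p.toReal) ^ (1 / p.toReal)

/-- The mixed norm of `ℓ^{p,q}(J,K')`. -/
def mixedSum {J K' : Type*} (p q : ℝ≥0∞) (a : J → K' → ℝ≥0∞) : ℝ≥0∞ :=
  lpSum q fun k => lpSum p fun j => a j k

/-- Membership in `ℓ^{p,q}_0(J,K')` (closure of the finitely supported families). -/
def MemSum0 {J K' : Type*} (p q : ℝ≥0∞) (a : J → K' → ℝ≥0∞) : Prop :=
  mixedSum p q a < ⊤ ∧
  ∀ ε : ℝ≥0∞, 0 < ε → ∃ S : Finset (J × K'),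
    mixedSum p q (fun j k => if (j, k) ∈ S then 0 else a j k) ≤ ε

/-- A restricted `(δ,R)`-lattice on `E × F_ℂ`. -/
structure IsRestrictedLattice {n m : ℕ} (Φ : E n → E n → FC m) (dN : N n m → N n m → ℝ)
    (δ R : ℝ) {J K' : Type*} (z : J → K' → X n m) : Prop where
  disjoint : ∀ a b : J × K', a ≠ b →
    Disjoint (oBall Φ dN (z a.1 a.2) δ) (oBall Φ dN (z b.1 b.2) δ)
  cover : ∀ p : X n m, ∃ j k, p ∈ cBall Φ dN (z j k) (R * δ)
  rho_eq : ∀ j j' k, rho Φ (z j k) = rho Φ (z j' k)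

/-- The dual exponent: `t' = ∞` if `t ≤ 1`, `t' = t/(t−1)` otherwise. -/
def dualExp (t : ℝ≥0∞) : ℝ≥0∞ :=
  if t = ∞ then 1 else if t ≤ 1 then ∞ else ENNReal.ofReal (t.toReal / (t.toReal - 1))

/-- `L^r` norm on `E × F_ℂ` (w.r.t. Lebesgue measure) of an `ℝ≥0∞`-valued function. -/
def lpX {n m : ℕ} (r : ℝ≥0∞) (u : X n m → ℝ≥0∞) : ℝ≥0∞ := lpENN r volume u

/-- Membership in `L^r_0(E × F_ℂ)` (closure of the measurable step functions in `L^r`). -/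
def MemLpX0 {n m : ℕ} (r : ℝ≥0∞) (u : X n m → ℝ≥0∞) : Prop :=
  lpX r u < ⊤ ∧
  ∀ ε : ℝ≥0∞, 0 < ε → ∃ s : SimpleFunc (X n m) ℝ≥0∞,
    lpX r (fun w => (u w - s w) + (s w - u w)) ≤ ε

/-- The image of `μ` under left translation by `g ∈ E × F_ℂ`. -/
def translateX {n m : ℕ} (Φ : E n → E n → FC m) (g : X n m) (μ : Measure (X n m)) :
    Measure (X n m) := Measure.map (fun x => mulX Φ g x) μ

/-- `ν ∈ W(μ)`: `ν` is in the vague closure of the set of left translates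
`L_{(ζ,x+iΦ(ζ))}μ`, `(ζ,x) ∈ 𝒩`. -/
def InW {n m : ℕ} (Φ : E n → E n → FC m) (μ ν : Measure (X n m)) : Prop :=
  ∀ (k : ℕ) (φ : Fin k → X n m → ℝ),
    (∀ i, Continuous (φ i) ∧ HasCompactSupport (φ i)) →
    ∀ ε : ℝ, 0 < ε → ∃ w : N n m, ∀ i,
      |(∫ x, φ i x ∂translateX Φ (liftN Φ 0 w) μ) - ∫ x, φ i x ∂ν| < ε

/-- `S` is a set of uniqueness for `ℬ^p_K(𝒩)`. -/
def UniqSet {n m : ℕ} (Φ : E n → E n → FC m) (K : Set (F m)) (p : ℝ≥0∞)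
    (S : Set (X n m)) : Prop :=
  ∀ f, MemB Φ K p f → (∀ x ∈ S, f x = 0) → f = 0

/-- `μ'` is sparse. -/
def Sparse {n m : ℕ} (Φ : E n → E n → FC m) (dN : N n m → N n m → ℝ)
    (μ' : Measure (X n m)) : Prop :=
  ∃ R : ℝ, 0 < R ∧ ∀ ε : ℝ≥0∞, 0 < ε → ∃ R' : ℝ, 0 < R' ∧
    ∀ p : X n m, p ∉ oBall Φ dN (0, 0) R' → MR Φ dN μ' R p ≤ ε

/-- `B(supp μ, R)`: the union of the `d`-balls of radius `R` centred on the support of `μ`. -/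
def suppBall {n m : ℕ} (Φ : E n → E n → FC m) (dN : N n m → N n m → ℝ)
    (μ : Measure (X n m)) (R : ℝ) : Set (X n m) :=
  {q | ∃ x ∈ suppM μ, dX Φ dN x q < R}

/-- The polar `A° = {h ∈ F : ⟨λ,h⟩ ≥ −1 for all λ ∈ A}`. -/
def polar {m : ℕ} (A : Set (F m)) : Set (F m) := {h | ∀ l ∈ A, -1 ≤ ⟪l, h⟫}

/-- The determinant of the positive hermitian form `(ζ,ζ') ↦ ⟨λ, Φ(ζ,ζ')⟩` on `E`, computed
with respect to the (orthonormal) standard basis of `E`; `|Pf(λ)|` is its absolute value. -/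
def pfDet {n m : ℕ} (Φ : E n → E n → FC m) (l : F m) : ℂ :=
  Matrix.det (Matrix.of fun k k' : Fin n =>
    ∑ j, (l j : ℂ) * (Φ (EuclideanSpace.single k 1) (EuclideanSpace.single k' 1)) j)

/-! On the set in question `|f₀(w)| ≤ ε ‖f₀ · L_w g₀‖_q`, so it suffices to show the Young-type
inequality `‖w ↦ ‖f₀ · L_w g₀‖_q‖_p ≤ ‖g₀‖_q ‖f₀‖_p` for `q ≤ p`. After the substitution
`v = w u`, `‖f₀ · L_w g₀‖_q^q = ∫ |f₀(wu)|^q |g₀(u)|^q du`; Jensen's inequality for the weight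
`|g₀|^q` bounds its `p/q`-th power by `‖g₀‖_q^{p-q} ∫ |f₀(wu)|^p |g₀(u)|^q du`, and integrating in
`w` uses that left and right translations of `𝒩` are shears `(ζ,x) ↦ (ζ+a, x+c(ζ))`, which preserve
Lebesgue measure. -/

theorem lintegral_mul_rpow_le {α : Type*} [MeasurableSpace α] {μ : Measure α}
    {A G : α → ℝ≥0∞} (hA : AEMeasurable A μ) (hG : AEMeasurable G μ) {r : ℝ} (hr : 1 ≤ r) :
    (∫⁻ a, A a * G a ∂μ) ^ r ≤ (∫⁻ a, A a ^ r * G a ∂μ) * (∫⁻ a, G a ∂μ) ^ (r - 1) := by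
  have hr₀ : 0 < r := zero_lt_one.trans_le hr
  have hr₁ : 0 ≤ 1 - r⁻¹ := sub_nonneg.2 (inv_le_one_of_one_le₀ hr)
  have hsplit : ∀ a, (A a ^ r * G a) ^ r⁻¹ * G a ^ (1 - r⁻¹) = A a * G a := fun a => by
    rw [ENNReal.mul_rpow_of_nonneg _ _ (inv_nonneg.2 hr₀.le), ← ENNReal.rpow_mul,
      mul_inv_cancel₀ hr₀.ne', ENNReal.rpow_one, mul_assoc,
      ← ENNReal.rpow_add_of_nonneg _ _ (inv_nonneg.2 hr₀.le) hr₁, add_sub_cancel, ENNReal.rpow_one]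
  -- Hölder with exponents `r` and `r / (r - 1)`, applied to `(A ^ r * G) ^ r⁻¹ * G ^ (1 - r⁻¹)`.
  have hHolder := ENNReal.lintegral_mul_norm_pow_le (f := fun a => A a ^ r * G a)
    ((hA.pow_const r).mul hG) hG (inv_nonneg.2 hr₀.le) hr₁ (add_sub_cancel _ _)
  rw [lintegral_congr hsplit] at hHolder
  calc (∫⁻ a, A a * G a ∂μ) ^ r
      ≤ ((∫⁻ a, A a ^ r * G a ∂μ) ^ r⁻¹ * (∫⁻ a, G a ∂μ) ^ (1 - r⁻¹)) ^ r := by gcongr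
    _ = (∫⁻ a, A a ^ r * G a ∂μ) * (∫⁻ a, G a ∂μ) ^ (r - 1) := by
      rw [ENNReal.mul_rpow_of_nonneg _ _ hr₀.le, ← ENNReal.rpow_mul, ← ENNReal.rpow_mul,
        inv_mul_cancel₀ hr₀.ne', ENNReal.rpow_one, sub_mul, one_mul, inv_mul_cancel₀ hr₀.ne']

theorem lintegral_rpow_lintegral_comp_mul_le {α : Type*} [MeasurableSpace α] {μ : Measure α}
    [SFinite μ] {mul : α → α → α} (hmul : Measurable (Function.uncurry mul))
    (hmul_right : ∀ u, MeasurePreserving (mul · u) μ μ) {A G : α → ℝ≥0∞}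
    (hA : Measurable A) (hG : Measurable G) {r : ℝ} (hr : 1 ≤ r) :
    ∫⁻ w, (∫⁻ u, A (mul w u) * G u ∂μ) ^ r ∂μ ≤ (∫⁻ w, A w ^ r ∂μ) * (∫⁻ u, G u ∂μ) ^ r := by
  have hAr : Measurable fun z : α × α => A (mul z.1 z.2) ^ r * G z.2 :=
    ((hA.comp hmul).pow_const r).mul (hG.comp measurable_snd)
  calc ∫⁻ w, (∫⁻ u, A (mul w u) * G u ∂μ) ^ r ∂μ
      ≤ ∫⁻ w, (∫⁻ u, A (mul w u) ^ r * G u ∂μ) * (∫⁻ u, G u ∂μ) ^ (r - 1) ∂μ :=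
        lintegral_mono fun w => lintegral_mul_rpow_le
          (hA.comp (hmul.comp measurable_prodMk_left)).aemeasurable hG.aemeasurable hr
    _ = (∫⁻ u, ∫⁻ w, A (mul w u) ^ r * G u ∂μ ∂μ) * (∫⁻ u, G u ∂μ) ^ (r - 1) := by
        rw [lintegral_mul_const _ hAr.lintegral_prod_right',
          lintegral_lintegral_swap hAr.aemeasurable]
    _ = (∫⁻ u, (∫⁻ w, A w ^ r ∂μ) * G u ∂μ) * (∫⁻ u, G u ∂μ) ^ (r - 1) := by
        congr 1
        refine lintegral_congr fun u => ?_
        rw [lintegral_mul_const (f := fun w => A (mul w u) ^ r) _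
          ((hA.pow_const r).comp (hmul_right u).measurable)]
        exact congrArg (· * G u) ((hmul_right u).lintegral_comp (hA.pow_const r))
    _ = (∫⁻ w, A w ^ r ∂μ) * (∫⁻ u, G u ∂μ) ^ r := by
        rw [lintegral_const_mul _ hG, mul_assoc]
        congr 1
        conv_lhs => enter [1]; rw [← ENNReal.rpow_one (∫⁻ u, G u ∂μ)]
        rw [← ENNReal.rpow_add_of_nonneg _ _ zero_le_one (by linarith), add_sub_cancel]

theorem measurePreserving_add_prod_skew {G H : Type*} [AddGroup G] [AddGroup H]
    [MeasurableSpace G] [MeasurableSpace H] [MeasurableAdd G] [MeasurableAdd₂ H]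
    {μ : Measure G} {ν : Measure H} [SFinite μ] [SFinite ν]
    [μ.IsAddRightInvariant] [ν.IsAddRightInvariant] (a : G) {c : G → H} (hc : Measurable c) :
    MeasurePreserving (fun z : G × H => (z.1 + a, z.2 + c z.1)) (μ.prod ν) (μ.prod ν) :=
  (measurePreserving_add_right μ a).skew_product (measurable_snd.add (hc.comp measurable_fst))
    (.of_forall fun x => map_add_right_eq_self ν (c x))

theorem eLpNorm_indicator_le_mul_eLpNorm {α F : Type*} [MeasurableSpace α] {μ : Measure α}
    [NormedAddCommGroup F] (f : α → F) (T : α → ℝ≥0∞) (c : ℝ≥0) (p : ℝ≥0∞) :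
    eLpNorm ({w | ‖f w‖ₑ ≤ c * T w}.indicator f) p μ ≤ c * eLpNorm T p μ := by
  refine eLpNorm_le_nnreal_smul_eLpNorm_of_ae_le_mul' (.of_forall fun w => ?_) p
  by_cases hw : w ∈ {w | ‖f w‖ₑ ≤ c * T w}
  · rwa [indicator_of_mem hw, enorm_eq_self]
  · simp [indicator_of_notMem hw]

section Nilpotent

variable {n m : ℕ} {Φ : E n → E n → FC m}

theorem IsHermitianMap.add_right (hΦ : IsHermitianMap Φ) (ζ ζ₁ ζ₂ : E n) :
    Φ ζ (ζ₁ + ζ₂) = Φ ζ ζ₁ + Φ ζ ζ₂ := by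
  ext k
  rw [hΦ.conj_symm _ ζ, hΦ.add_left, PiLp.add_apply, map_add, PiLp.add_apply,
    ← hΦ.conj_symm, ← hΦ.conj_symm]

theorem IsHermitianMap.real_smul_left (hΦ : IsHermitianMap Φ) (r : ℝ) (ζ ζ' : E n) :
    Φ (r • ζ) ζ' = r • Φ ζ ζ' := by
  rw [← Complex.coe_smul, hΦ.smul_left, Complex.coe_smul]

theorem IsHermitianMap.real_smul_right (hΦ : IsHermitianMap Φ) (r : ℝ) (ζ ζ' : E n) :
    Φ ζ (r • ζ') = r • Φ ζ ζ' := by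
  ext k
  rw [hΦ.conj_symm _ ζ, hΦ.real_smul_left, PiLp.smul_apply, PiLp.smul_apply, Complex.real_smul,
    Complex.real_smul, map_mul, Complex.conj_ofReal, ← hΦ.conj_symm]

theorem IsHermitianMap.neg_left (hΦ : IsHermitianMap Φ) (ζ ζ' : E n) : Φ (-ζ) ζ' = -Φ ζ ζ' := by
  simpa using hΦ.real_smul_left (-1) ζ ζ'

theorem IsHermitianMap.imPart_self (hΦ : IsHermitianMap Φ) (ζ : E n) : imPart (Φ ζ ζ) = 0 := by
  ext k
  simpa [imPart, Complex.conj_im, ← Complex.conj_eq_iff_im] using (hΦ.conj_symm ζ ζ k).symm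

def IsHermitianMap.toLinearMap₂ (hΦ : IsHermitianMap Φ) : E n →ₗ[ℝ] E n →ₗ[ℝ] FC m :=
  LinearMap.mk₂ ℝ Φ hΦ.add_left hΦ.real_smul_left hΦ.add_right hΦ.real_smul_right

theorem IsHermitianMap.continuous (hΦ : IsHermitianMap Φ) :
    Continuous fun z : E n × E n => Φ z.1 z.2 :=
  (LinearMap.toContinuousLinearMap
    (LinearMap.toContinuousLinearMap.toLinearMap ∘ₗ hΦ.toLinearMap₂)).continuous₂

theorem continuous_liftN (hΦ : IsHermitianMap Φ) (h : F m) : Continuous (liftN Φ h) := by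
  have := hΦ.continuous
  unfold liftN phiQ rePart toC
  fun_prop

theorem measurable_mulN (hΦ : IsHermitianMap Φ) :
    Measurable fun z : N n m × N n m => mulN Φ z.1 z.2 := by
  have := hΦ.continuous
  unfold mulN imPart
  fun_prop

theorem imPart_add (z z' : FC m) : imPart (z + z') = imPart z + imPart z' := by
  ext k; simp [imPart]

theorem imPart_neg (z : FC m) : imPart (-z) = -imPart z := by
  ext k; simp [imPart]

theorem invN_mulN (hΦ : IsHermitianMap Φ) (w u : N n m) : mulN Φ (invN w) (mulN Φ w u) = u := by
  simp only [mulN, invN, hΦ.add_right, hΦ.neg_left, imPart_add, imPart_neg, hΦ.imPart_self,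
    neg_zero, zero_add, smul_neg, add_assoc, neg_add_cancel_left, add_neg_cancel, add_zero,
    Prod.mk.eta]

theorem measurePreserving_mulN_left (hΦ : IsHermitianMap Φ) (w : N n m) :
    MeasurePreserving (mulN Φ w) volume volume := by
  have hc : Measurable fun ζ : E n => w.2 + (2 : ℝ) • imPart (Φ w.1 ζ) := by
    have := hΦ.continuous
    unfold imPart
    fun_prop
  have hmul : mulN Φ w = fun u => (u.1 + w.1, u.2 + (w.2 + (2 : ℝ) • imPart (Φ w.1 u.1))) :=
    funext fun u => Prod.ext (add_comm _ _) (by simp only [mulN]; rw [add_comm w.2, add_assoc])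
  rw [hmul, Measure.volume_eq_prod]
  exact measurePreserving_add_prod_skew w.1 hc

theorem measurePreserving_mulN_right (hΦ : IsHermitianMap Φ) (u : N n m) :
    MeasurePreserving (mulN Φ · u) volume volume := by
  have hc : Measurable fun ζ : E n => u.2 + (2 : ℝ) • imPart (Φ ζ u.1) := by
    have := hΦ.continuous
    unfold imPart
    fun_prop
  have hmul : (mulN Φ · u) = fun w => (w.1 + u.1, w.2 + (u.2 + (2 : ℝ) • imPart (Φ w.1 u.1))) :=
    funext fun w => Prod.ext rfl (add_assoc _ _ _)
  rw [hmul, Measure.volume_eq_prod]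
  exact measurePreserving_add_prod_skew u.1 hc

theorem lintegral_mul_comp_invN_mulN (hΦ : IsHermitianMap Φ)
    (w : N n m) {φ ψ : N n m → ℝ≥0∞} (hφ : Measurable φ) (hψ : Measurable ψ) :
    ∫⁻ v, φ v * ψ (mulN Φ (invN w) v) = ∫⁻ u, φ (mulN Φ w u) * ψ u := by
  rw [← (measurePreserving_mulN_left hΦ w).lintegral_comp
    (f := fun v => φ v * ψ (mulN Φ (invN w) v))
    (hφ.mul (hψ.comp (measurable_mulN hΦ).of_uncurry_left))]
  simp only [invN_mulN hΦ]

theorem eLpNorm_eLpNorm_mul_LtN_le (hΦ : IsHermitianMap Φ)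
    {p q : ℝ} (hq : 0 < q) (hqp : q ≤ p) {f g : N n m → ℂ} (hf : Measurable f)
    (hg : Measurable g) :
    eLpNorm (fun w => eLpNorm (fun v => f v * LtN Φ w g v) (ENNReal.ofReal q) volume)
        (ENNReal.ofReal p) volume ≤
      eLpNorm g (ENNReal.ofReal q) volume * eLpNorm f (ENNReal.ofReal p) volume := by
  have hp : 0 < p := hq.trans_le hqp
  have hr : 1 ≤ p / q := (one_le_div hq).2 hqp
  set A : N n m → ℝ≥0∞ := fun v => ‖f v‖ₑ ^ q
  set G : N n m → ℝ≥0∞ := fun v => ‖g v‖ₑ ^ q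
  have hA : Measurable A := hf.enorm.pow_const q
  have hG : Measurable G := hg.enorm.pow_const q
  have hAr : ∀ v, A v ^ (p / q) = ‖f v‖ₑ ^ p := fun v => by
    rw [← ENNReal.rpow_mul, mul_div_cancel₀ _ hq.ne']
  have hinner : ∀ w, eLpNorm (fun v => f v * LtN Φ w g v) (ENNReal.ofReal q) volume =
      (∫⁻ u, A (mulN Φ w u) * G u) ^ q⁻¹ := fun w => by
    rw [eLpNorm_eq_lintegral_rpow_enorm_toReal (by simpa using hq) ENNReal.ofReal_ne_top,
      ENNReal.toReal_ofReal hq.le, one_div]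
    simp only [LtN, enorm_mul, ENNReal.mul_rpow_of_nonneg _ _ hq.le]
    rw [lintegral_mul_comp_invN_mulN hΦ w hA hG]
  simp_rw [hinner]
  simp only [eLpNorm_eq_lintegral_rpow_enorm_toReal (by simpa using hq) ENNReal.ofReal_ne_top,
    eLpNorm_eq_lintegral_rpow_enorm_toReal (by simpa using hp) ENNReal.ofReal_ne_top,
    ENNReal.toReal_ofReal hq.le, ENNReal.toReal_ofReal hp.le, enorm_eq_self, ← ENNReal.rpow_mul]
  have hyoung := lintegral_rpow_lintegral_comp_mul_le (measurable_mulN hΦ)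
    (measurePreserving_mulN_right hΦ) hA hG hr
  simp only [hAr] at hyoung
  rw [inv_mul_eq_div]
  calc (∫⁻ w, (∫⁻ u, A (mulN Φ w u) * G u) ^ (p / q)) ^ (1 / p)
      ≤ ((∫⁻ v, ‖f v‖ₑ ^ p) * (∫⁻ v, G v) ^ (p / q)) ^ (1 / p) := by gcongr
    _ = (∫⁻ v, ‖g v‖ₑ ^ q) ^ (1 / q) * (∫⁻ v, ‖f v‖ₑ ^ p) ^ (1 / p) := by
      rw [ENNReal.mul_rpow_of_nonneg _ _ (by positivity), ← ENNReal.rpow_mul, mul_comm,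
        show p / q * (1 / p) = 1 / q by field_simp]

end Nilpotent

theorem statement13_general {n m : ℕ} (Φ : E n → E n → FC m)
    (hΦ : IsHermitianMap Φ)
    (p q : ℝ) (hq : 0 < q) (hqp : q ≤ p)
    (K K' : Set (F m))
    (g : X n m → ℂ) (hg : HolK Φ K' g)
    (hgq : eLpNorm (fun v : N n m => g (liftN Φ 0 v)) (ENNReal.ofReal q) volume < ⊤) :
    ∃ C : ℝ, 0 < C ∧
      ∀ ε : ℝ, 0 < ε → ∀ f : X n m → ℂ, MemB Φ K (ENNReal.ofReal p) f →
        eLpNorm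
            (Set.indicator
              {w : N n m | (‖f (liftN Φ 0 w)‖₊ : ℝ≥0∞) ≤
                ENNReal.ofReal ε *
                  eLpNorm (fun v : N n m =>
                    f (liftN Φ 0 v) * LtN Φ w (fun v' => g (liftN Φ 0 v')) v)
                    (ENNReal.ofReal q) volume}
              (fun w : N n m => f (liftN Φ 0 w)))
            (ENNReal.ofReal p) volume ≤
          ENNReal.ofReal (C * ε) *
            eLpNorm (fun w : N n m => f (liftN Φ 0 w)) (ENNReal.ofReal p) volume := by
  set Cg := eLpNorm (fun v : N n m => g (liftN Φ 0 v)) (ENNReal.ofReal q) volume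
  refine ⟨Cg.toReal + 1, by positivity, fun ε hε f hf => ?_⟩
  have hf₀ : Measurable fun w => f (liftN Φ 0 w) :=
    (hf.1.1.continuous.comp (continuous_liftN hΦ 0)).measurable
  have hg₀ : Measurable fun w => g (liftN Φ 0 w) :=
    (hg.1.continuous.comp (continuous_liftN hΦ 0)).measurable
  have hCg : Cg ≤ ENNReal.ofReal (Cg.toReal + 1) :=
    (ENNReal.le_ofReal_iff_toReal_le hgq.ne (by positivity)).2 (by linarith)
  calc _ ≤ ENNReal.ofReal ε * eLpNorm _ (ENNReal.ofReal p) volume :=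
        eLpNorm_indicator_le_mul_eLpNorm _ _ ε.toNNReal _
    _ ≤ ENNReal.ofReal ε * (ENNReal.ofReal (Cg.toReal + 1) *
          eLpNorm (fun w : N n m => f (liftN Φ 0 w)) (ENNReal.ofReal p) volume) := by
        gcongr
        exact (eLpNorm_eLpNorm_mul_LtN_le hΦ hq hqp hf₀ hg₀).trans (by gcongr)
    _ = _ := by rw [mul_comm _ ε, ENNReal.ofReal_mul hε.le, mul_assoc]

/-- the `L^p` norm of `f₀` over the set `B^{q,g}_{ε,f}` where `|f₀|` is dominated
by `ε ‖f₀ · L_{(ζ,x)}g₀‖_{L^q}` is at most `Cε‖f₀‖_{L^p}`. -/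
theorem statement13 {n m : ℕ} (Φ : E n → E n → FC m)
    (hΦ : IsHermitianMap Φ) (hΛ : (Lambda Φ).Nonempty)
    (p q : ℝ) (hq : 0 < q) (hqp : q ≤ p)
    (K K' : Set (F m)) (hKsub : K ⊆ closure (Lambda Φ)) (hK : IsCompact K)
    (hK'sub : K' ⊆ closure (Lambda Φ)) (hK' : IsCompact K')
    (g : X n m → ℂ) (hg : HolK Φ K' g)
    (hgq : eLpNorm (fun v : N n m => g (liftN Φ 0 v)) (ENNReal.ofReal q) volume < ⊤) :
    ∃ C : ℝ, 0 < C ∧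
      ∀ ε : ℝ, 0 < ε → ∀ f : X n m → ℂ, MemB Φ K (ENNReal.ofReal p) f →
        eLpNorm
            (Set.indicator
              {w : N n m | (‖f (liftN Φ 0 w)‖₊ : ℝ≥0∞) ≤
                ENNReal.ofReal ε *
                  eLpNorm (fun v : N n m =>
                    f (liftN Φ 0 v) * LtN Φ w (fun v' => g (liftN Φ 0 v')) v)
                    (ENNReal.ofReal q) volume}
              (fun w : N n m => f (liftN Φ 0 w)))
            (ENNReal.ofReal p) volume ≤
          ENNReal.ofReal (C * ε) *
            eLpNorm (fun w : N n m => f (liftN Φ 0 w)) (ENNReal.ofReal p) volume :=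
  statement13_general Φ hΦ p q hq hqp K K' g hg hgq

end Siegel
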